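/- Let f : Ω → ℂ be a nonvanishing scalar C¹ function on an open set Ω ⊆ ℝ³. If w : Ω → ℍ(ℂ) is a purely vectorial C¹ solution of the equation Dw + w·(Df/f) = 0, then rot(w/f) = 0 and div(fw) = 0 on Ω. -/

import Mathlib

open Quaternion

noncomputable section

/-- Points of ℝ³. -/
abbrev P3 := EuclideanSpace ℝ (Fin 3)

/-- Partial derivative ∂ₖ of a complex-valued function on ℝ³. -/
def pd (k : Fin 3) (F : P3 → ℂ) : P3 → ℂ :=
  fun p => fderiv ℝ F p (EuclideanSpace.single k 1)

/-- The Laplacian Δ = ∂₁² + ∂₂² + ∂₃². -/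
def lap3 (F : P3 → ℂ) : P3 → ℂ := fun p => ∑ k : Fin 3, pd k (pd k F) p

/-- Embedding of a complex scalar as a quaternion. -/
def qC (z : ℂ) : ℍ[ℂ] := ⟨z, 0, 0, 0⟩

/-- The quaternionic imaginary units e₁, e₂, e₃. -/
def qe : Fin 3 → ℍ[ℂ] := ![⟨0,1,0,0⟩, ⟨0,0,1,0⟩, ⟨0,0,0,1⟩]

/-- The eₖ-components of a quaternion. -/
def qcomp : Fin 3 → ℍ[ℂ] → ℂ := ![QuaternionAlgebra.imI, QuaternionAlgebra.imJ, QuaternionAlgebra.imK]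

/-- Quaternionic conjugation C_H. -/
def CH (q : ℍ[ℂ]) : ℍ[ℂ] := ⟨q.re, -q.imI, -q.imJ, -q.imK⟩

/-- Componentwise partial derivative of a quaternion-valued function. -/
def pdq (k : Fin 3) (W : P3 → ℍ[ℂ]) : P3 → ℍ[ℂ] :=
  fun p => ⟨pd k (fun x => (W x).re) p, pd k (fun x => (W x).imI) p,
            pd k (fun x => (W x).imJ) p, pd k (fun x => (W x).imK) p⟩

/-- The Dirac (Moisil–Theodorescu) operator D Q = Σₖ eₖ ∂ₖ Q. -/
def Dq (W : P3 → ℍ[ℂ]) : P3 → ℍ[ℂ] := fun p => ∑ k : Fin 3, qe k * pdq k W p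

/-- The right Dirac operator Dᵣ Q = Σₖ (∂ₖ Q) eₖ. -/
def Drq (W : P3 → ℍ[ℂ]) : P3 → ℍ[ℂ] := fun p => ∑ k : Fin 3, pdq k W p * qe k

/-- Gradient of a scalar function viewed as a purely vectorial quaternion. -/
def gradq (F : P3 → ℂ) : P3 → ℍ[ℂ] := fun p => ⟨0, pd 0 F p, pd 1 F p, pd 2 F p⟩

/-- Divergence of (the vector part of) a quaternion-valued function. -/
def divq (W : P3 → ℍ[ℂ]) : P3 → ℂ :=
  fun p => pd 0 (fun x => (W x).imI) p + pd 1 (fun x => (W x).imJ) p + pd 2 (fun x => (W x).imK) p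

/-- Rotor (curl) of (the vector part of) a quaternion-valued function. -/
def rotq (W : P3 → ℍ[ℂ]) : P3 → ℍ[ℂ] :=
  fun p => ⟨0,
    pd 1 (fun x => (W x).imK) p - pd 2 (fun x => (W x).imJ) p,
    pd 2 (fun x => (W x).imI) p - pd 0 (fun x => (W x).imK) p,
    pd 0 (fun x => (W x).imJ) p - pd 1 (fun x => (W x).imI) p⟩

/-- Cross product of the vector parts of two quaternions. -/
def crossq (u v : ℍ[ℂ]) : ℍ[ℂ] :=
  ⟨0, u.imJ * v.imK - u.imK * v.imJ, u.imK * v.imI - u.imI * v.imK, u.imI * v.imJ - u.imJ * v.imI⟩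

/-- Bilinear scalar product of the vector parts of two quaternions. -/
def dotq (u v : ℍ[ℂ]) : ℂ := u.imI * v.imI + u.imJ * v.imJ + u.imK * v.imK

/-- `Cⁿ` smoothness of a quaternion-valued function on a set, componentwise. -/
def QContDiffOn (n : ℕ) (W : P3 → ℍ[ℂ]) (Ω : Set P3) : Prop :=
  ContDiffOn ℝ n (fun p => (W p).re) Ω ∧ ContDiffOn ℝ n (fun p => (W p).imI) Ω ∧
  ContDiffOn ℝ n (fun p => (W p).imJ) Ω ∧ ContDiffOn ℝ n (fun p => (W p).imK) Ω

/-- The pure-quaternion Df/f built from a nonvanishing scalar function f. -/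
def DfF (f : P3 → ℂ) : P3 → ℍ[ℂ] := fun p => (f p)⁻¹ • gradq f p

/-! For purely vectorial quaternions the product splits as `u v = -⟨u, v⟩ + u × v`, and for a
purely vectorial `w` the Dirac operator splits as `D w = -div w + rot w`. Hence the equation
`D w + w (∇f / f) = 0` is equivalent to its scalar part `div w + ⟨w, ∇f⟩ / f = 0` and its vector
part `rot w + w × ∇f / f = 0`. The product rules `div (f w) = f div w + ⟨∇f, w⟩` and
`rot (w / f) = rot w / f - ∇f × w / f²` turn these into `div (f w) = 0` and `rot (w / f) = 0`. -/

lemma pd_mul {k : Fin 3} {g h : P3 → ℂ} {p : P3}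
    (hg : DifferentiableAt ℝ g p) (hh : DifferentiableAt ℝ h p) :
    pd k (fun x => g x * h x) p = g p * pd k h p + pd k g p * h p := by
  simp only [pd, fderiv_fun_mul hg hh, add_apply, smul_apply, smul_eq_mul]
  ring

lemma pd_inv {k : Fin 3} {g : P3 → ℂ} {p : P3}
    (hg : DifferentiableAt ℝ g p) (h0 : g p ≠ 0) :
    pd k (fun x => (g x)⁻¹) p = -(g p ^ 2)⁻¹ * pd k g p := by
  have hderiv := ((hasFDerivAt_inv' (𝕜 := ℝ) h0).comp p hg.hasFDerivAt).fderiv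
  simp only [Function.comp_def] at hderiv
  simp only [pd, hderiv, ContinuousLinearMap.neg_comp, neg_apply,
    ContinuousLinearMap.comp_apply, ContinuousLinearMap.mulLeftRight_apply]
  ring

lemma pd_eq_zero_of_eventuallyEq_zero {k : Fin 3} {g : P3 → ℂ} {p : P3}
    (hg : g =ᶠ[nhds p] fun _ => 0) : pd k g p = 0 := by
  simp [pd, hg.fderiv_eq]

lemma gradq_inv {g : P3 → ℂ} {p : P3} (hg : DifferentiableAt ℝ g p) (h0 : g p ≠ 0) :
    gradq (fun x => (g x)⁻¹) p = -(g p ^ 2)⁻¹ • gradq g p := by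
  ext <;> simp only [re_smul, imI_smul, imJ_smul, imK_smul] <;> simp [gradq, pd_inv hg h0]

section ProductRules

variable {g : P3 → ℂ} {W : P3 → ℍ[ℂ]} {p : P3}
  (hg : DifferentiableAt ℝ g p) (hI : DifferentiableAt ℝ (fun x => (W x).imI) p)
  (hJ : DifferentiableAt ℝ (fun x => (W x).imJ) p) (hK : DifferentiableAt ℝ (fun x => (W x).imK) p)
include hg hI hJ hK

lemma divq_smul : divq (fun x => g x • W x) p = g p * divq W p + dotq (gradq g p) (W p) := by
  simp only [divq, dotq, gradq, imI_smul, imJ_smul, imK_smul, smul_eq_mul,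
    pd_mul hg hI, pd_mul hg hJ, pd_mul hg hK]
  ring

lemma rotq_smul : rotq (fun x => g x • W x) p = g p • rotq W p + crossq (gradq g p) (W p) := by
  ext <;> simp only [re_add, imI_add, imJ_add, imK_add, re_smul, imI_smul, imJ_smul, imK_smul] <;>
    simp only [rotq, crossq, gradq, imI_smul, imJ_smul, imK_smul, smul_eq_mul,
      pd_mul hg hI, pd_mul hg hJ, pd_mul hg hK, mul_zero, add_zero] <;> ring

end ProductRules

section VectorAlgebra

variable (u v : ℍ[ℂ]) (c : ℂ)

lemma dotq_comm : dotq u v = dotq v u := by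
  simp only [dotq]
  ring

lemma dotq_smul_right : dotq u (c • v) = c * dotq u v := by
  simp only [dotq, imI_smul, imJ_smul, imK_smul, smul_eq_mul]
  ring

lemma crossq_comm : crossq u v = -crossq v u := by
  ext <;> simp only [re_neg, imI_neg, imJ_neg, imK_neg] <;> simp only [crossq, neg_zero, neg_sub] <;> ring

lemma crossq_smul_left : crossq (c • u) v = c • crossq u v := by
  ext <;> simp only [re_smul, imI_smul, imJ_smul, imK_smul] <;>
    simp only [crossq, imI_smul, imJ_smul, imK_smul, smul_eq_mul, mul_zero] <;> ring

lemma crossq_smul_right : crossq u (c • v) = c • crossq u v := by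
  rw [crossq_comm, crossq_smul_left, crossq_comm v, smul_neg, neg_neg]

lemma mul_eq_of_re_eq_zero {u v : ℍ[ℂ]} (hu : u.re = 0) (hv : v.re = 0) :
    u * v = qC (-dotq u v) + crossq u v := by
  ext <;> simp only [re_add, imI_add, imJ_add, imK_add, re_mul, imI_mul, imJ_mul, imK_mul] <;>
    simp only [qC, dotq, crossq, hu, hv, zero_mul, mul_zero, add_zero, zero_add, zero_sub] <;> ring

end VectorAlgebra

lemma Dq_eq_of_re_eventuallyEq_zero {W : P3 → ℍ[ℂ]} {p : P3}
    (hW : (fun x => (W x).re) =ᶠ[nhds p] fun _ => 0) :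
    Dq W p = qC (-divq W p) + rotq W p := by
  have hre : ∀ k, pd k (fun x => (W x).re) p = 0 := fun k => pd_eq_zero_of_eventuallyEq_zero hW
  ext <;> simp only [Dq, Fin.sum_univ_three, re_add, imI_add, imJ_add, imK_add,
      re_mul, imI_mul, imJ_mul, imK_mul] <;>
    simp only [qe, Matrix.cons_val, pdq, hre, qC, divq, rotq, zero_mul, mul_zero, one_mul,
      add_zero, zero_add, sub_zero, zero_sub, sub_self] <;> ring

lemma Dq_add_mul_eq_zero_iff {W : P3 → ℍ[ℂ]} {p : P3} {u : ℍ[ℂ]}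
    (hW : (fun x => (W x).re) =ᶠ[nhds p] fun _ => 0) (hu : u.re = 0) :
    Dq W p + W p * u = 0 ↔ divq W p + dotq (W p) u = 0 ∧ rotq W p + crossq (W p) u = 0 := by
  rw [Dq_eq_of_re_eventuallyEq_zero hW, mul_eq_of_re_eq_zero hW.self_of_nhds hu]
  simp only [Quaternion.ext_iff, re_add, imI_add, imJ_add, imK_add, re_zero, imI_zero, imJ_zero,
    imK_zero]
  simp only [qC, rotq, crossq, add_zero, zero_add, true_and]
  constructor <;> rintro ⟨h0, h1, h2, h3⟩ <;> exact ⟨by linear_combination -h0, h1, h2, h3⟩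

lemma re_DfF (f : P3 → ℂ) (p : P3) : (DfF f p).re = 0 := by
  simp only [DfF, re_smul]
  simp only [gradq, smul_eq_mul, mul_zero]

lemma QContDiffOn.differentiableAt_im {n : ℕ} {W : P3 → ℍ[ℂ]} {Ω : Set P3} {p : P3}
    (hW : QContDiffOn n W Ω) (hn : n ≠ 0) (hΩ : Ω ∈ nhds p) :
    DifferentiableAt ℝ (fun x => (W x).imI) p ∧ DifferentiableAt ℝ (fun x => (W x).imJ) p ∧
      DifferentiableAt ℝ (fun x => (W x).imK) p := by
  obtain ⟨-, hI, hJ, hK⟩ := hW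
  have hn' : (n : WithTop ℕ∞) ≠ 0 := by exact_mod_cast hn
  exact ⟨(hI.contDiffAt hΩ).differentiableAt hn', (hJ.contDiffAt hΩ).differentiableAt hn',
    (hK.contDiffAt hΩ).differentiableAt hn'⟩

/-- if w is a purely vectorial solution of Dw + w·(Df/f) = 0,
    then rot(w/f) = 0 and div(fw) = 0. -/
theorem statement13 (Ω : Set P3) (hΩ : IsOpen Ω)
    (f : P3 → ℂ) (hf : ContDiffOn ℝ 1 f Ω) (hf0 : ∀ p ∈ Ω, f p ≠ 0)
    (w : P3 → ℍ[ℂ]) (hw : QContDiffOn 1 w Ω) (hw0 : ∀ p ∈ Ω, (w p).re = 0)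
    (heq : ∀ p ∈ Ω, Dq w p + w p * DfF f p = 0) :
    ∀ p ∈ Ω,
      (rotq (fun x => (f x)⁻¹ • w x) p = 0) ∧
      (divq (fun x => f x • w x) p = 0) := by
  intro p hp
  have hΩp : Ω ∈ nhds p := hΩ.mem_nhds hp
  have hfp := hf0 p hp
  have hdf : DifferentiableAt ℝ f p := (hf.contDiffAt hΩp).differentiableAt one_ne_zero
  obtain ⟨hI, hJ, hK⟩ := hw.differentiableAt_im one_ne_zero hΩp
  have hwre : (fun x => (w x).re) =ᶠ[nhds p] fun _ => 0 := Filter.mem_of_superset hΩp hw0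
  obtain ⟨hdiv, hrot⟩ := (Dq_add_mul_eq_zero_iff hwre (re_DfF f p)).1 (heq p hp)
  simp only [DfF, dotq_smul_right, crossq_smul_right] at hdiv hrot
  constructor
  · rw [rotq_smul (g := fun x => (f x)⁻¹) (hdf.inv hfp) hI hJ hK, gradq_inv hdf hfp,
      crossq_smul_left, crossq_comm, eq_neg_of_add_eq_zero_left hrot]
    module
  · rw [divq_smul hdf hI hJ hK, eq_neg_of_add_eq_zero_left hdiv, dotq_comm]
    field_simp
    ring
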